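/- arXiv:1301.6392 — 2 statements merged into one kernel-verified Lean document; each statement's English description precedes it below -/
import Mathlib

section
/- Let (v_n) be a positive sequence with lim n(1 - v_{n-1}/v_n) = v*, let (γ_n) be a positive sequence with lim n(1 - γ_{n-1}/γ_n) = -α and γ_n → 0, set ξ = lim 1/(nγ_n) (possibly 0), and let m > 0 satisfy m - v*ξ > 0. Then, with Π_n = ∏_{j=1}^n (1-γ_j), one has lim_{n→∞} v_n Π_n^m ∑_{k=1}^n Π_k^{-m} γ_k / v_k = 1/(m - v*ξ). -/
/-!
With `b_n = Π_n ^ (-m) / v_n` the summand is `b_k γ_k`, so the quantity is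
`(∑_{k ≤ n} b_k γ_k) / b_n`, and `b_n - b_{n-1} = t_n b_n γ_n` with
`t_n = (1 - (1 - γ_n) ^ m v_n / v_{n-1}) / γ_n`. Expanding `(1 - γ_n) ^ m` to first order and using
the regular variation of `v` gives `t_n → m - v* ξ > 0`. Hence `b` is eventually increasing, so
`∑ b_k γ_k` diverges together with `∑ γ_k` (which diverges because `γ_k ≥ 1 / ((ξ + 1) k)`
eventually), and the Stolz–Cesàro theorem yields `b_n / ∑_{k ≤ n} b_k γ_k → m - v* ξ`.
-/

open Filter Finset Topology Asymptotics

theorem Finset.sum_Icc_one_eq_sum_range {M : Type*} [AddCommMonoid M] (f : ℕ → M) (n : ℕ) :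
    ∑ k ∈ Icc 1 n, f k = ∑ k ∈ range n, f (k + 1) := by
  induction n with
  | zero => simp
  | succ n ih => rw [sum_Icc_succ_top (by omega), sum_range_succ, ih]

/-- Stolz–Cesàro. -/
theorem tendsto_div_sum_range_of_tendsto_sub_div {a d : ℕ → ℝ} {c : ℝ} (hd : ∀ n, 0 < d n)
    (hS : Tendsto (fun n => ∑ i ∈ range n, d i) atTop atTop)
    (h : Tendsto (fun n => (a (n + 1) - a n) / d n) atTop (𝓝 c)) :
    Tendsto (fun n => a n / ∑ i ∈ range n, d i) atTop (𝓝 c) := by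
  have hsmall : (fun n => a (n + 1) - a n - c * d n) =o[atTop] d := by
    have : (fun n => ((a (n + 1) - a n) / d n - c) * d n) =o[atTop] fun n => (1 : ℝ) * d n :=
      ((isLittleO_one_iff ℝ).2 (tendsto_sub_nhds_zero_iff.2 h)).mul_isBigO (isBigO_refl d atTop)
    refine this.congr (fun n => ?_) fun _ => one_mul _
    field_simp [(hd n).ne']
  have hsum : (fun n => a n - a 0 - c * ∑ i ∈ range n, d i) =o[atTop] fun n => ∑ i ∈ range n, d i :=
    (hsmall.sum_range (fun n => (hd n).le) hS).congr
      (fun n => by rw [sum_sub_distrib, sum_range_sub, mul_sum]) fun _ => rfl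
  have key := (hsum.tendsto_div_nhds_zero.add
    ((tendsto_const_nhds (x := a 0)).div_atTop hS)).add_const c
  rw [zero_add, zero_add] at key
  refine key.congr' ?_
  filter_upwards [hS.eventually_gt_atTop 0] with n hn
  field_simp
  ring

theorem tendsto_sum_mul_div_of_tendsto_one_sub_div {b g : ℕ → ℝ} {c : ℝ} (hb : ∀ n, 0 < b n)
    (hg : ∀ n, 0 < g n) (hgs : ¬Summable g) (hc : 0 < c)
    (h : Tendsto (fun n => (1 - b n / b (n + 1)) / g (n + 1)) atTop (𝓝 c)) :
    Tendsto (fun n => (∑ k ∈ range n, b (k + 1) * g (k + 1)) / b n) atTop (𝓝 c⁻¹) := by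
  obtain ⟨N, hN⟩ : ∃ N, ∀ n ≥ N, b n ≤ b (n + 1) := by
    refine eventually_atTop.1 ?_
    filter_upwards [h.eventually_const_lt hc] with n hn
    have := (div_pos_iff_of_pos_right (hg _)).1 hn
    rw [sub_pos, div_lt_one (hb _)] at this
    exact this.le
  have hlower : ∀ n ≥ N, b N ≤ b n := fun n hn =>
    monotoneOn_nat_Ici_of_le_succ hN Set.self_mem_Ici hn hn
  have hd : ∀ k, 0 < b (k + 1) * g (k + 1) := fun k => mul_pos (hb _) (hg _)
  have hdiv : ¬Summable fun k => b (k + 1) * g (k + 1) := by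
    refine fun hs => hgs ((summable_nat_add_iff 1).1 ?_)
    refine (hs.mul_left (b N)⁻¹).of_norm_bounded_eventually_nat ?_
    filter_upwards [eventually_ge_atTop N] with k hk
    rw [Real.norm_of_nonneg (hg _).le, le_inv_mul_iff₀ (hb N)]
    exact mul_le_mul_of_nonneg_right (hlower _ (by omega)) (hg _).le
  have hS := (not_summable_iff_tendsto_nat_atTop_of_nonneg fun k => (hd k).le).1 hdiv
  have hlim := tendsto_div_sum_range_of_tendsto_sub_div hd hS <| h.congr fun n => by
    field_simp [(hb n).ne', (hb (n + 1)).ne', (hg (n + 1)).ne']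
  exact (hlim.inv₀ hc.ne').congr fun n => inv_div _ _

theorem not_summable_of_tendsto_one_div_mul {γ : ℕ → ℝ} {ξ : ℝ} (hγ : ∀ n, 0 < γ n)
    (hξ : Tendsto (fun n : ℕ => 1 / ((n : ℝ) * γ n)) atTop (𝓝 ξ)) : ¬Summable γ := by
  refine fun hs => Real.not_summable_natCast_inv
    ((hs.mul_left (ξ + 1)).of_norm_bounded_eventually_nat ?_)
  filter_upwards [hξ.eventually_le_const (lt_add_one ξ), eventually_gt_atTop 0] with n hn hn0
  have hn0' : (0 : ℝ) < n := by exact_mod_cast hn0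
  calc ‖(n : ℝ)⁻¹‖ = 1 / (n * γ n) * γ n := by
        rw [Real.norm_of_nonneg (by positivity)]; field_simp [(hγ n).ne']
    _ ≤ (ξ + 1) * γ n := mul_le_mul_of_nonneg_right hn (hγ n).le

theorem tendsto_one_sub_one_sub_rpow_div (m : ℝ) :
    Tendsto (fun x : ℝ => (1 - (1 - x) ^ m) / x) (𝓝[≠] 0) (𝓝 m) := by
  have hd : HasDerivAt (fun x : ℝ => (1 - x) ^ m) (-m) 0 := by
    simpa using ((hasDerivAt_id (0 : ℝ)).const_sub 1).rpow_const (p := m) (Or.inl (by norm_num))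
  refine (neg_neg m ▸ hd.tendsto_slope_zero.neg).congr fun x => ?_
  simp only [zero_add, sub_zero, Real.one_rpow, smul_eq_mul]
  ring

theorem tendsto_div_pred_of_tendsto_mul_one_sub {v : ℕ → ℝ} {ρ : ℝ}
    (hv : Tendsto (fun n : ℕ => (n : ℝ) * (1 - v (n - 1) / v n)) atTop (𝓝 ρ)) :
    Tendsto (fun n => v (n - 1) / v n) atTop (𝓝 1) := by
  have h0 : Tendsto (fun n : ℕ => 1 - v (n - 1) / v n) atTop (𝓝 0) := by
    have := (tendsto_inv_atTop_zero.comp tendsto_natCast_atTop_atTop).mul hv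
    rw [zero_mul] at this
    refine this.congr' ?_
    filter_upwards [eventually_gt_atTop 0] with n hn
    simp [(Nat.cast_pos.2 hn).ne']
  simpa using (tendsto_const_nhds (x := (1 : ℝ))).sub h0

theorem tendsto_mul_one_sub_div_pred {v : ℕ → ℝ} {ρ : ℝ} (hv0 : ∀ n, v n ≠ 0)
    (hv : Tendsto (fun n : ℕ => (n : ℝ) * (1 - v (n - 1) / v n)) atTop (𝓝 ρ)) :
    Tendsto (fun n : ℕ => (n : ℝ) * (1 - v n / v (n - 1))) atTop (𝓝 (-ρ)) := by
  have hq := ((tendsto_div_pred_of_tendsto_mul_one_sub hv).inv₀ one_ne_zero).neg.mul hv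
  rw [inv_one, neg_one_mul] at hq
  refine hq.congr fun n => ?_
  field_simp [hv0 n, hv0 (n - 1)]
  ring

theorem tendsto_one_sub_rpow_mul_div {v γ : ℕ → ℝ} {ρ ξ : ℝ} (m : ℝ) (hv0 : ∀ n, v n ≠ 0)
    (hγ : ∀ n, γ n ≠ 0)
    (hv : Tendsto (fun n : ℕ => (n : ℝ) * (1 - v (n - 1) / v n)) atTop (𝓝 ρ))
    (hγ0 : Tendsto γ atTop (𝓝 0))
    (hξ : Tendsto (fun n : ℕ => 1 / ((n : ℝ) * γ n)) atTop (𝓝 ξ)) :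
    Tendsto (fun n => (1 - (1 - γ n) ^ m * (v n / v (n - 1))) / γ n) atTop (𝓝 (m - ρ * ξ)) := by
  have hγ0' : Tendsto γ atTop (𝓝[≠] 0) :=
    tendsto_nhdsWithin_of_tendsto_nhds_of_eventually_within _ hγ0 (.of_forall hγ)
  have hpow : Tendsto (fun n => (1 - γ n) ^ m) atTop (𝓝 1) := by
    simpa using ((tendsto_const_nhds (x := (1 : ℝ))).sub hγ0).rpow_const (p := m)
      (Or.inl (by norm_num))
  have hlim := ((tendsto_one_sub_one_sub_rpow_div m).comp hγ0').add
    (hpow.mul ((tendsto_mul_one_sub_div_pred hv0 hv).mul hξ))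
  rw [one_mul, neg_mul, ← sub_eq_add_neg] at hlim
  refine hlim.congr' ?_
  filter_upwards [eventually_gt_atTop 0] with n hn
  simp only [Function.comp_apply]
  field_simp [hγ n, (Nat.cast_pos.2 hn).ne', hv0 n, hv0 (n - 1)]
  ring

theorem stmt0_general (v γ : ℕ → ℝ) (vstar ξ m : ℝ)
    (hv : ∀ n, 0 < v n)
    (hγ : ∀ n, γ n ∈ Set.Ioo (0:ℝ) 1)
    (hvGS : Tendsto (fun n : ℕ => (n : ℝ) * (1 - v (n-1) / v n)) atTop (nhds vstar))
    (hγ0 : Tendsto γ atTop (nhds 0))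
    (hξ : Tendsto (fun n : ℕ => 1 / ((n : ℝ) * γ n)) atTop (nhds ξ))
    (hmξ : 0 < m - vstar * ξ) :
    Tendsto (fun n : ℕ =>
      v n * (∏ j ∈ Icc 1 n, (1 - γ j)) ^ m *
        ∑ k ∈ Icc 1 n, ((∏ j ∈ Icc 1 k, (1 - γ j)) ^ (-m)) * γ k / v k)
      atTop (nhds (1 / (m - vstar * ξ))) := by
  set P : ℕ → ℝ := fun n => ∏ j ∈ Icc 1 n, (1 - γ j)
  have hγ1 : ∀ n, 0 < 1 - γ n := fun n => sub_pos.2 (hγ n).2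
  have hP : ∀ n, 0 < P n := fun n => prod_pos fun j _ => hγ1 j
  have hb : ∀ n, 0 < P n ^ (-m) / v n := fun n => div_pos (Real.rpow_pos_of_pos (hP n) _) (hv n)
  have hratio (n : ℕ) : P n ^ (-m) / v n / (P (n + 1) ^ (-m) / v (n + 1)) =
      (1 - γ (n + 1)) ^ m * (v (n + 1) / v n) := by
    have hPsucc : P (n + 1) = P n * (1 - γ (n + 1)) := prod_Icc_succ_top (by omega) _
    rw [hPsucc, Real.mul_rpow (hP n).le (hγ1 _).le, Real.rpow_neg (hγ1 _).le]
    field_simp [(hv n).ne', (hv (n + 1)).ne', (Real.rpow_pos_of_pos (hP n) (-m)).ne',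
      (Real.rpow_pos_of_pos (hγ1 (n + 1)) m).ne']
  have key := tendsto_sum_mul_div_of_tendsto_one_sub_div hb (fun n => (hγ n).1)
    (not_summable_of_tendsto_one_div_mul (fun n => (hγ n).1) hξ) hmξ
    (((tendsto_one_sub_rpow_mul_div m (fun n => (hv n).ne') (fun n => (hγ n).1.ne') hvGS hγ0
      hξ).comp (tendsto_add_atTop_nat 1)).congr fun n => by rw [hratio]; rfl)
  rw [one_div]
  refine key.congr fun n => ?_
  rw [sum_Icc_one_eq_sum_range, Real.rpow_neg (hP n).le]
  field_simp [(hv n).ne', (Real.rpow_pos_of_pos (hP n) m).ne']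
  ring

theorem stmt0 (v γ : ℕ → ℝ) (vstar α ξ m : ℝ)
    (hv : ∀ n, 0 < v n)
    (hγ : ∀ n, γ n ∈ Set.Ioo (0:ℝ) 1)
    (hvGS : Tendsto (fun n : ℕ => (n : ℝ) * (1 - v (n-1) / v n)) atTop (nhds vstar))
    (hγGS : Tendsto (fun n : ℕ => (n : ℝ) * (1 - γ (n-1) / γ n)) atTop (nhds (-α)))
    (hγ0 : Tendsto γ atTop (nhds 0))
    (hξ : Tendsto (fun n : ℕ => 1 / ((n : ℝ) * γ n)) atTop (nhds ξ))
    (hm : 0 < m) (hmξ : 0 < m - vstar * ξ) :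
    Tendsto (fun n : ℕ =>
      v n * (∏ j ∈ Icc 1 n, (1 - γ j)) ^ m *
        ∑ k ∈ Icc 1 n, ((∏ j ∈ Icc 1 k, (1 - γ j)) ^ (-m)) * γ k / v k)
      atTop (nhds (1 / (m - vstar * ξ))) :=
  stmt0_general v γ vstar ξ m hv hγ hvGS hγ0 hξ hmξ
end

section
/- Under the hypotheses of the previous lemma (v_n ∈ GS(v*), γ_n ∈ GS(-α) with γ_n → 0, ξ = lim 1/(nγ_n), m - v*ξ > 0), for any positive sequence (α_n) with lim α_n = 0 and any δ ∈ ℝ, one has lim_{n→∞} v_n Π_n^m [ ∑_{k=1}^n Π_k^{-m} (γ_k/v_k) α_k + δ ] = 0. -/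
/-!
Put `w n = v n * Π_n ^ m`. The hypotheses give `log (w (n+1) / w n) / γ (n+1) → v* ξ - m < 0`,
hence `w (n+1) ≤ (1 - c γ (n+1)) w n` eventually, for some `c > 0`. Equivalently
`c γ k / w k ≤ 1 / w k - 1 / w (k-1)`, so a tail `∑_{K<k≤n} γ k / w k` telescopes to at
most `1 / (c w n)`. As `1 / n = O(γ n)`, `γ` is not summable, which forces `w n → 0`; splitting
the sum at a point beyond which `|α k|` is small then gives `w n ∑_{k≤n} γ k α k / w k → 0`.
-/

open Filter Finset

open Topology Real

theorem tendsto_mul_log_one_sub {ι : Type*} {l : Filter ι} {a t : ι → ℝ} {L : ℝ}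
    (ht : Tendsto t l (𝓝 0)) (hat : Tendsto (fun i => a i * t i) l (𝓝 L)) :
    Tendsto (fun i => a i * log (1 - t i)) l (𝓝 (-L)) := by
  -- `dslope g 0` is the continuous extension of `log (1 - x) / x` by its value `-1` at `0`.
  set g : ℝ → ℝ := fun x => log (1 - x)
  have hg : HasDerivAt g (-1) 0 := by
    simpa using ((hasDerivAt_id (0:ℝ)).const_sub 1).log (by norm_num)
  have hslope : Tendsto (fun i => dslope g 0 (t i)) l (𝓝 (-1)) := by
    simpa [dslope_same, hg.deriv, Function.comp_def] using
      (continuousAt_dslope_same.2 hg.differentiableAt).tendsto.comp ht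
  have key : ∀ i, a i * log (1 - t i) = a i * t i * dslope g 0 (t i) := fun i => by
    have := sub_smul_dslope g 0 (t i)
    simp only [sub_zero, smul_eq_mul, g, log_one] at this
    rw [mul_assoc, this]
  simpa [key] using hat.mul hslope

theorem tendsto_log_one_sub_div_self {ι : Type*} {l : Filter ι} {t : ι → ℝ}
    (ht : Tendsto t l (𝓝 0)) (hne : ∀ i, t i ≠ 0) :
    Tendsto (fun i => log (1 - t i) / t i) l (𝓝 (-1)) := by
  have h := tendsto_mul_log_one_sub ht
    (tendsto_const_nhds.congr fun i => (inv_mul_cancel₀ (hne i)).symm)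
  simpa only [inv_mul_eq_div] using h

theorem tendsto_natCast_mul_log_div_pred {v : ℕ → ℝ} {L : ℝ}
    (h : Tendsto (fun n : ℕ => (n : ℝ) * (1 - v (n - 1) / v n)) atTop (𝓝 L)) :
    Tendsto (fun n : ℕ => (n : ℝ) * log (v n / v (n - 1))) atTop (𝓝 L) := by
  have ht : Tendsto (fun n : ℕ => 1 - v (n - 1) / v n) atTop (𝓝 0) := by
    have := h.mul tendsto_inv_atTop_nhds_zero_nat
    rw [mul_zero] at this
    refine this.congr' ?_
    filter_upwards [eventually_ne_atTop 0] with n hn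
    field_simp
  have := (tendsto_mul_log_one_sub ht h).neg
  rw [neg_neg] at this
  refine this.congr fun n => ?_
  rw [sub_sub_cancel, ← mul_neg, ← log_inv, inv_div]

theorem not_summable_of_tendsto_one_div_natCast_mul {γ : ℕ → ℝ} {ξ : ℝ}
    (hγ : ∀ n, γ n ≠ 0)
    (hξ : Tendsto (fun n : ℕ => 1 / ((n : ℝ) * γ n)) atTop (𝓝 ξ)) : ¬ Summable γ := by
  intro hs
  refine Real.not_summable_one_div_natCast (summable_of_isBigO_nat hs ?_)
  refine Asymptotics.isBigO_of_div_tendsto_nhds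
    (Eventually.of_forall fun n h => absurd h (hγ n)) ξ ?_
  exact hξ.congr fun n => (div_div 1 (n : ℝ) (γ n)).symm

theorem exp_neg_mul_le_one_sub_mul {b t : ℝ} (hb : 0 ≤ b) (ht0 : 0 ≤ t) (ht1 : t ≤ 1) :
    exp (-(b * t)) ≤ 1 - b / (1 + b) * t := by
  have hbt : 0 ≤ b * t := mul_nonneg hb ht0
  calc exp (-(b * t)) = (exp (b * t))⁻¹ := exp_neg _
    _ ≤ (1 + b * t)⁻¹ := inv_anti₀ (by positivity) (by linarith [add_one_le_exp (b * t)])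
    _ ≤ 1 - b / (1 + b) * t := by
      rw [inv_le_iff_one_le_mul₀' (by positivity)]
      field_simp
      nlinarith [mul_le_mul_of_nonneg_left ht1 hbt]

theorem exists_decay_of_tendsto_log_div {w γ : ℕ → ℝ} {L : ℝ} (hL : L < 0)
    (hw : ∀ n, 0 < w n) (hγ : ∀ n, γ n ∈ Set.Ioo (0 : ℝ) 1)
    (h : Tendsto (fun n => log (w (n + 1) / w n) / γ (n + 1)) atTop (𝓝 L)) :
    ∃ c > 0, ∀ᶠ n in atTop, w (n + 1) ≤ (1 - c * γ (n + 1)) * w n := by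
  obtain ⟨b, hb, hLb⟩ : ∃ b > 0, L < -b := ⟨-L / 2, by linarith, by linarith⟩
  refine ⟨b / (1 + b), by positivity, ?_⟩
  filter_upwards [h.eventually (gt_mem_nhds hLb)] with n hn
  obtain ⟨hγ0, hγ1⟩ := hγ (n + 1)
  have hlog : log (w (n + 1) / w n) < -(b * γ (n + 1)) := by
    rw [div_lt_iff₀ hγ0] at hn
    linarith
  have hratio := (log_lt_iff_lt_exp (div_pos (hw (n + 1)) (hw n))).1 hlog
  rw [div_lt_iff₀ (hw n)] at hratio
  nlinarith [exp_neg_mul_le_one_sub_mul hb.le hγ0.le hγ1.le, hw n]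

theorem tendsto_sum_Ioc_atTop {f : ℕ → ℝ} (hf : ∀ n, 0 ≤ f n) (hfs : ¬ Summable f)
    (N : ℕ) :
    Tendsto (fun n => ∑ k ∈ Ioc N n, f k) atTop atTop := by
  have h := ((not_summable_iff_tendsto_nat_atTop_of_nonneg hf).1 hfs).comp
    (tendsto_add_atTop_nat 1)
  refine (tendsto_atTop_add_const_left _ (-∑ k ∈ range (N + 1), f k) h).congr' ?_
  filter_upwards [eventually_ge_atTop N] with n hn
  rw [Function.comp_apply, ← sum_range_add_sum_Ico _ (by omega : N + 1 ≤ n + 1),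
    Ico_add_one_add_one_eq_Ioc]
  ring

section Decay

variable {w γ : ℕ → ℝ} {c : ℝ}

theorem mul_sum_Ioc_div_le_inv_sub_inv {N : ℕ} (hw : ∀ n, 0 < w n)
    (hdecay : ∀ n, N ≤ n → w (n + 1) ≤ (1 - c * γ (n + 1)) * w n) {K n : ℕ}
    (hK : N ≤ K) (hKn : K ≤ n) :
    c * ∑ k ∈ Ioc K n, γ k / w k ≤ (w n)⁻¹ - (w K)⁻¹ := by
  induction n, hKn using Nat.le_induction with
  | base => simp
  | succ n hKn ih =>
    have step : c * (γ (n + 1) / w (n + 1)) ≤ (w (n + 1))⁻¹ - (w n)⁻¹ := by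
      have h := hdecay n (hK.trans hKn)
      have := hw n
      have := hw (n + 1)
      rw [inv_sub_inv (hw _).ne' (hw _).ne', le_div_iff₀ (by positivity)]
      field_simp
      nlinarith
    rw [sum_Ioc_succ_top hKn, mul_add]
    linarith

theorem inv_le_inv_of_decay {N : ℕ} (hc : 0 ≤ c) (hw : ∀ n, 0 < w n) (hγ : ∀ n, 0 ≤ γ n)
    (hdecay : ∀ n, N ≤ n → w (n + 1) ≤ (1 - c * γ (n + 1)) * w n) {K n : ℕ}
    (hK : N ≤ K) (hKn : K ≤ n) : (w K)⁻¹ ≤ (w n)⁻¹ := by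
  have := mul_sum_Ioc_div_le_inv_sub_inv hw hdecay hK hKn
  have : 0 ≤ c * ∑ k ∈ Ioc K n, γ k / w k :=
    mul_nonneg hc (sum_nonneg fun k _ => div_nonneg (hγ k) (hw k).le)
  linarith

theorem abs_mul_sum_Ioc_div_le {N : ℕ} (hc : 0 < c) (hw : ∀ n, 0 < w n)
    (hγ : ∀ n, 0 ≤ γ n) (hdecay : ∀ n, N ≤ n → w (n + 1) ≤ (1 - c * γ (n + 1)) * w n)
    {a : ℕ → ℝ} {B : ℝ} {K n : ℕ}
    (hB : 0 ≤ B) (ha : ∀ k ∈ Ioc K n, |a k| ≤ B) (hK : N ≤ K) (hKn : K ≤ n) :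
    |w n * ∑ k ∈ Ioc K n, γ k * a k / w k| ≤ B / c := by
  calc |w n * ∑ k ∈ Ioc K n, γ k * a k / w k|
      ≤ w n * ∑ k ∈ Ioc K n, B * (γ k / w k) := by
        rw [abs_mul, abs_of_pos (hw n)]
        refine mul_le_mul_of_nonneg_left ((abs_sum_le_sum_abs _ _).trans
          (sum_le_sum fun k hk => ?_)) (hw n).le
        rw [abs_div, abs_mul, abs_of_nonneg (hγ k), abs_of_pos (hw k), mul_comm (γ k),
          mul_div_assoc]
        exact mul_le_mul_of_nonneg_right (ha k hk) (div_nonneg (hγ k) (hw k).le)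
    _ = B / c * (w n * (c * ∑ k ∈ Ioc K n, γ k / w k)) := by
        rw [← mul_sum]
        field_simp
    _ ≤ B / c * (w n * ((w n)⁻¹ - (w K)⁻¹)) := by
        gcongr
        · exact (hw n).le
        · exact mul_sum_Ioc_div_le_inv_sub_inv hw hdecay hK hKn
    _ ≤ B / c := by
        rw [mul_sub, mul_inv_cancel₀ (hw n).ne']
        nlinarith [mul_pos (hw n) (inv_pos.2 (hw K)), div_nonneg hB hc.le]

variable (hc : 0 < c) (hw : ∀ n, 0 < w n) (hγ : ∀ n, 0 ≤ γ n)
  (hdecay : ∀ᶠ n in atTop, w (n + 1) ≤ (1 - c * γ (n + 1)) * w n)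
include hc hw hγ hdecay

theorem tendsto_zero_of_le_one_sub_mul (hγs : ¬ Summable γ) : Tendsto w atTop (𝓝 0) := by
  obtain ⟨N, hN⟩ := eventually_atTop.1 hdecay
  have hinv : Tendsto (fun n => (w n)⁻¹) atTop atTop := by
    refine tendsto_atTop_mono' atTop ?_
      ((tendsto_sum_Ioc_atTop hγ hγs N).const_mul_atTop (mul_pos hc (inv_pos.2 (hw N))))
    filter_upwards [eventually_ge_atTop N] with n hn
    calc c * (w N)⁻¹ * ∑ k ∈ Ioc N n, γ k
        = c * ∑ k ∈ Ioc N n, γ k * (w N)⁻¹ := by rw [← sum_mul]; ring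
      _ ≤ c * ∑ k ∈ Ioc N n, γ k / w k := by
        gcongr with k hk
        exact mul_le_mul_of_nonneg_left
          (inv_le_inv_of_decay hc.le hw hγ hN le_rfl (mem_Ioc.1 hk).1.le) (hγ k)
      _ ≤ (w n)⁻¹ - (w N)⁻¹ := mul_sum_Ioc_div_le_inv_sub_inv hw hN le_rfl hn
      _ ≤ (w n)⁻¹ := by linarith [inv_pos.2 (hw N)]
  exact hinv.inv_tendsto_atTop.congr fun n => inv_inv (w n)

theorem tendsto_mul_sum_Icc_div_of_decay (hγs : ¬ Summable γ) {a : ℕ → ℝ}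
    (ha : Tendsto a atTop (𝓝 0)) :
    Tendsto (fun n => w n * ∑ k ∈ Icc 1 n, γ k * a k / w k) atTop (𝓝 0) := by
  obtain ⟨N, hN⟩ := eventually_atTop.1 hdecay
  rw [Metric.tendsto_nhds]
  intro ε hε
  obtain ⟨K₀, hK₀⟩ := Metric.tendsto_atTop.1 ha (c * (ε / 2)) (by positivity)
  set K := max N K₀
  have hhead : ∀ᶠ n in atTop, |w n * ∑ k ∈ Icc 1 K, γ k * a k / w k| < ε / 2 := by
    have := ((tendsto_zero_of_le_one_sub_mul hc hw hγ hdecay hγs).mul_const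
      (∑ k ∈ Icc 1 K, γ k * a k / w k)).abs
    rw [zero_mul, abs_zero] at this
    exact this.eventually (eventually_lt_nhds (half_pos hε))
  filter_upwards [hhead, eventually_ge_atTop K] with n hhead hn
  have htail : |w n * ∑ k ∈ Ioc K n, γ k * a k / w k| ≤ ε / 2 := by
    have hsmall : ∀ k ∈ Ioc K n, |a k| ≤ c * (ε / 2) := fun k hk => by
      have := hK₀ k (le_of_max_le_right (mem_Ioc.1 hk).1.le)
      rw [Real.dist_0_eq_abs] at this
      exact this.le
    simpa only [mul_div_cancel_left₀ _ hc.ne'] using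
      abs_mul_sum_Ioc_div_le hc hw hγ hN (by positivity) hsmall (le_max_left N K₀) hn
  have hsplit : ∑ k ∈ Icc 1 n, γ k * a k / w k
      = ∑ k ∈ Icc 1 K, γ k * a k / w k + ∑ k ∈ Ioc K n, γ k * a k / w k := by
    simp only [show ∀ j, Icc 1 j = Ioc 0 j from Icc_add_one_left_eq_Ioc 0]
    exact (sum_Ioc_consecutive _ (Nat.zero_le K) hn).symm
  rw [Real.dist_eq, sub_zero, hsplit, mul_add]
  exact (abs_add_le _ _).trans_lt (by linarith)

end Decay

noncomputable def prodWeight (v γ : ℕ → ℝ) (m : ℝ) (n : ℕ) : ℝ :=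
  v n * (∏ j ∈ Icc 1 n, (1 - γ j)) ^ m

section prodWeight

variable {v γ : ℕ → ℝ} {m : ℝ}

theorem prod_one_sub_pos (hγ : ∀ n, γ n < 1) (n : ℕ) : 0 < ∏ j ∈ Icc 1 n, (1 - γ j) :=
  prod_pos fun j _ => sub_pos.2 (hγ j)

theorem prodWeight_pos (hv : ∀ n, 0 < v n) (hγ : ∀ n, γ n < 1) (n : ℕ) :
    0 < prodWeight v γ m n :=
  mul_pos (hv n) (rpow_pos_of_pos (prod_one_sub_pos hγ n) m)

theorem log_prodWeight_succ_div (hv : ∀ n, 0 < v n) (hγ : ∀ n, γ n < 1) (n : ℕ) :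
    log (prodWeight v γ m (n + 1) / prodWeight v γ m n)
      = log (v (n + 1) / v n) + m * log (1 - γ (n + 1)) := by
  have hP := prod_one_sub_pos hγ n
  have hγn := sub_pos.2 (hγ (n + 1))
  have hratio : prodWeight v γ m (n + 1) / prodWeight v γ m n
      = v (n + 1) / v n * (1 - γ (n + 1)) ^ m := by
    rw [prodWeight, prodWeight, prod_Icc_succ_top (by omega), mul_rpow hP.le hγn.le]
    field_simp [(hv n).ne', (rpow_pos_of_pos hP m).ne']
  rw [hratio, log_mul (div_pos (hv _) (hv n)).ne' (rpow_pos_of_pos hγn m).ne', log_rpow hγn]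

theorem tendsto_log_prodWeight_succ_div {vstar ξ : ℝ} (hv : ∀ n, 0 < v n)
    (hγ : ∀ n, γ n ∈ Set.Ioo (0 : ℝ) 1)
    (hvGS : Tendsto (fun n : ℕ => (n : ℝ) * (1 - v (n - 1) / v n)) atTop (𝓝 vstar))
    (hγ0 : Tendsto γ atTop (𝓝 0))
    (hξ : Tendsto (fun n : ℕ => 1 / ((n : ℝ) * γ n)) atTop (𝓝 ξ)) :
    Tendsto (fun n => log (prodWeight v γ m (n + 1) / prodWeight v γ m n) / γ (n + 1)) atTop
      (𝓝 (vstar * ξ - m)) := by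
  have hlim := ((tendsto_natCast_mul_log_div_pred hvGS).mul hξ).add
    ((tendsto_log_one_sub_div_self hγ0 fun n => (hγ n).1.ne').const_mul m)
  rw [show vstar * ξ - m = vstar * ξ + m * -1 by ring]
  refine ((tendsto_add_atTop_iff_nat 1).2 hlim).congr fun n => ?_
  have hn : ((n + 1 : ℕ) : ℝ) ≠ 0 := Nat.cast_ne_zero.2 n.succ_ne_zero
  rw [log_prodWeight_succ_div hv (fun n => (hγ n).2), Nat.add_sub_cancel]
  field_simp

theorem prodWeight_mul_sum_add (hγ : ∀ n, γ n < 1) (a : ℕ → ℝ) (δ : ℝ) (n : ℕ) :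
    v n * (∏ j ∈ Icc 1 n, (1 - γ j)) ^ m *
        ((∑ k ∈ Icc 1 n, ((∏ j ∈ Icc 1 k, (1 - γ j)) ^ (-m)) * (γ k / v k) * a k) + δ)
      = prodWeight v γ m n * ∑ k ∈ Icc 1 n, γ k * a k / prodWeight v γ m k
        + prodWeight v γ m n * δ := by
  rw [← prodWeight, mul_add, mul_sum, mul_sum]
  congr 1
  refine sum_congr rfl fun k _ => ?_
  rw [prodWeight, prodWeight, rpow_neg (prod_one_sub_pos hγ k).le, div_eq_mul_inv _ (_ * _),
    mul_inv]
  ring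

end prodWeight

theorem stmt1_general (v γ : ℕ → ℝ) (vstar ξ m : ℝ)
    (hv : ∀ n, 0 < v n)
    (hγ : ∀ n, γ n ∈ Set.Ioo (0:ℝ) 1)
    (hvGS : Tendsto (fun n : ℕ => (n : ℝ) * (1 - v (n-1) / v n)) atTop (nhds vstar))
    (hγ0 : Tendsto γ atTop (nhds 0))
    (hξ : Tendsto (fun n : ℕ => 1 / ((n : ℝ) * γ n)) atTop (nhds ξ))
    (hmξ : 0 < m - vstar * ξ)
    (αseq : ℕ → ℝ)
    (hα0 : Tendsto αseq atTop (nhds 0)) (δ : ℝ) :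
    Tendsto (fun n : ℕ =>
      v n * (∏ j ∈ Icc 1 n, (1 - γ j)) ^ m *
        ((∑ k ∈ Icc 1 n, ((∏ j ∈ Icc 1 k, (1 - γ j)) ^ (-m)) * (γ k / v k) * αseq k) + δ))
      atTop (nhds 0) := by
  have hγ1 : ∀ n, γ n < 1 := fun n => (hγ n).2
  have hγ_nonneg : ∀ n, 0 ≤ γ n := fun n => (hγ n).1.le
  have hw : ∀ n, 0 < prodWeight v γ m n := prodWeight_pos hv hγ1
  obtain ⟨c, hc, hdecay⟩ := exists_decay_of_tendsto_log_div (by linarith) hw hγ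
    (tendsto_log_prodWeight_succ_div hv hγ hvGS hγ0 hξ)
  have hγs : ¬ Summable γ :=
    not_summable_of_tendsto_one_div_natCast_mul (fun n => (hγ n).1.ne') hξ
  have hsum := tendsto_mul_sum_Icc_div_of_decay hc hw hγ_nonneg hdecay hγs hα0
  have hw0 := tendsto_zero_of_le_one_sub_mul hc hw hγ_nonneg hdecay hγs
  simpa only [prodWeight_mul_sum_add hγ1, zero_mul, add_zero] using hsum.add (hw0.mul_const δ)

theorem stmt1 (v γ : ℕ → ℝ) (vstar α ξ m : ℝ)
    (hv : ∀ n, 0 < v n)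
    (hγ : ∀ n, γ n ∈ Set.Ioo (0:ℝ) 1)
    (hvGS : Tendsto (fun n : ℕ => (n : ℝ) * (1 - v (n-1) / v n)) atTop (nhds vstar))
    (hγGS : Tendsto (fun n : ℕ => (n : ℝ) * (1 - γ (n-1) / γ n)) atTop (nhds (-α)))
    (hγ0 : Tendsto γ atTop (nhds 0))
    (hξ : Tendsto (fun n : ℕ => 1 / ((n : ℝ) * γ n)) atTop (nhds ξ))
    (hm : 0 < m) (hmξ : 0 < m - vstar * ξ)
    (αseq : ℕ → ℝ) (hα : ∀ n, 0 < αseq n)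
    (hα0 : Tendsto αseq atTop (nhds 0)) (δ : ℝ) :
    Tendsto (fun n : ℕ =>
      v n * (∏ j ∈ Icc 1 n, (1 - γ j)) ^ m *
        ((∑ k ∈ Icc 1 n, ((∏ j ∈ Icc 1 k, (1 - γ j)) ^ (-m)) * (γ k / v k) * αseq k) + δ))
      atTop (nhds 0) :=
  stmt1_general v γ vstar ξ m hv hγ hvGS hγ0 hξ hmξ αseq hα0 δ
end
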